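/- arXiv:2310.02603 — 5 statements merged into one kernel-verified Lean document; each statement's English description precedes it below -/
import Mathlib

section
/- Let m ≥ 1 be an integer and δ₀ > -m. With p_k(δ₀) = (2 + δ₀/m) · Γ(k+δ₀)Γ(m+2+δ₀+δ₀/m) / (Γ(m+δ₀)Γ(k+3+δ₀+δ₀/m)) for k ≥ m, the sum ∑_{k=m}^∞ p_k(δ₀) converges and equals 1, i.e., (p_k)_{k≥m} is a probability distribution on {m, m+1, m+2, …}. -/
/-- Limiting degree distribution of the affine preferential attachment model. -/
noncomputable def pdeg (m : ℕ) (δ : ℝ) (k : ℕ) : ℝ :=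
  (2 + δ / m) * (Real.Gamma (k + δ) * Real.Gamma (m + 2 + δ + δ / m)) /
    (Real.Gamma (m + δ) * Real.Gamma (k + 3 + δ + δ / m))

theorem stmt_1 (m : ℕ) (hm : 1 ≤ m) (δ₀ : ℝ) (hδ : -(m : ℝ) < δ₀) :
    HasSum (fun j : ℕ => pdeg m δ₀ (m + j)) 1 := by
  have hm0 : (0:ℝ) < m := by exact_mod_cast hm
  have hmδ : 0 < (m:ℝ) + δ₀ := by linarith
  have hs1 : 1 < 2 + δ₀ / m := by
    have : -1 < δ₀ / m := by rw [lt_div_iff₀ hm0]; linarith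
    linarith
  set s : ℝ := 2 + δ₀ / m with hs_def
  have hdm : -1 < δ₀ / (m:ℝ) := by rw [lt_div_iff₀ hm0]; linarith
  have hs0 : 0 < s := by linarith
  have hx : ∀ n : ℕ, 0 < (m:ℝ) + n + δ₀ := fun n => by
    have : (0:ℝ) ≤ n := n.cast_nonneg; linarith
  set q : ℕ → ℝ := fun n => Real.Gamma ((m:ℝ) + n + δ₀) / Real.Gamma ((m:ℝ) + n + δ₀ + s)
    with hq
  have hqpos : ∀ n, 0 < q n := fun n =>
    div_pos (Real.Gamma_pos_of_pos (hx n)) (Real.Gamma_pos_of_pos (by linarith [hx n]))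
  set C : ℝ := Real.Gamma ((m:ℝ) + δ₀ + s) / Real.Gamma ((m:ℝ) + δ₀) with hC
  -- telescoping identity
  have key : ∀ n : ℕ, pdeg m δ₀ (m + n) = C * (q n - q (n + 1)) := by
    intro n
    set x : ℝ := (m:ℝ) + n + δ₀ with hxdef
    have hx0 : 0 < x := hx n
    have hxs : 0 < x + s := by linarith
    have h1 : ((m:ℝ) + (n+1:ℕ) + δ₀) = x + 1 := by push_cast; ring
    have h2 : ((m:ℝ) + (n+1:ℕ) + δ₀ + s) = (x + s) + 1 := by push_cast; ring
    have hG1 : Real.Gamma (x + 1) = x * Real.Gamma x := Real.Gamma_add_one hx0.ne'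
    have hG2 : Real.Gamma ((x + s) + 1) = (x + s) * Real.Gamma (x + s) :=
      Real.Gamma_add_one hxs.ne'
    have hGx : Real.Gamma x ≠ 0 := (Real.Gamma_pos_of_pos hx0).ne'
    have hGxs : Real.Gamma (x + s) ≠ 0 := (Real.Gamma_pos_of_pos hxs).ne'
    have hGm : Real.Gamma ((m:ℝ) + δ₀) ≠ 0 := (Real.Gamma_pos_of_pos hmδ).ne'
    have e1 : ((m+n : ℕ) : ℝ) + δ₀ = x := by push_cast; ring
    have e2 : ((m+n : ℕ) : ℝ) + 3 + δ₀ + δ₀ / m = (x + s) + 1 := by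
      rw [hxdef, hs_def]; push_cast; ring
    have e3 : (m:ℝ) + 2 + δ₀ + δ₀ / m = (m:ℝ) + δ₀ + s := by rw [hs_def]; ring
    rw [pdeg, e1, e2, e3]
    simp only [hq, hC]
    rw [← hxdef, h2, h1, hG1, hG2, ← hs_def]
    field_simp [hGx, hGxs, hGm, hxs.ne']
    ring
  have hq0 : C * q 0 = 1 := by
    have e : (m:ℝ) + (0:ℕ) + δ₀ = (m:ℝ) + δ₀ := by push_cast; ring
    simp only [hq, hC]
    rw [e]
    field_simp [(Real.Gamma_pos_of_pos hmδ).ne',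
      (Real.Gamma_pos_of_pos (show (0:ℝ) < (m:ℝ) + δ₀ + s by linarith)).ne']
  -- q tends to 0
  have hqlim : Filter.Tendsto q Filter.atTop (nhds 0) := by
    have hub : ∀ᶠ n : ℕ in Filter.atTop, q n ≤ ((m:ℝ) + n + δ₀)⁻¹ := by
      filter_upwards [Filter.eventually_ge_atTop 2] with n hn
      set x : ℝ := (m:ℝ) + n + δ₀ with hxdef
      have hx1 : (1:ℝ) ≤ x := by
        have : (2:ℝ) ≤ n := by exact_mod_cast hn
        nlinarith
      have hx0 : 0 < x := hx n
      have hmono : Real.Gamma (x + 1) ≤ Real.Gamma (x + s) := by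
        rcases eq_or_lt_of_le (show x + 1 ≤ x + s by linarith) with h | h
        · rw [h]
        · exact le_of_lt (Real.Gamma_strictMonoOn_Ici (by simp [Set.mem_Ici]; linarith)
            (by simp [Set.mem_Ici]; linarith) h)
      have hG1 : Real.Gamma (x + 1) = x * Real.Gamma x := Real.Gamma_add_one hx0.ne'
      have hGx : 0 < Real.Gamma x := Real.Gamma_pos_of_pos hx0
      have hGxs : 0 < Real.Gamma (x + s) := Real.Gamma_pos_of_pos (by linarith)
      have : x * Real.Gamma x ≤ Real.Gamma (x + s) := by rw [← hG1]; exact hmono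
      rw [hq]
      rw [div_le_iff₀ hGxs, inv_mul_eq_div, le_div_iff₀ hx0]
      linarith [mul_le_mul_of_nonneg_left this (le_of_lt hx0)]
      -- fallback
    have hxtend : Filter.Tendsto (fun n : ℕ => (m:ℝ) + n + δ₀) Filter.atTop Filter.atTop := by
      apply Filter.tendsto_atTop_add_const_right
      exact Filter.tendsto_atTop_add_const_left _ _ tendsto_natCast_atTop_atTop
    have hinv : Filter.Tendsto (fun n : ℕ => ((m:ℝ) + n + δ₀)⁻¹) Filter.atTop (nhds 0) :=
      hxtend.inv_tendsto_atTop
    exact squeeze_zero' (Filter.Eventually.of_forall fun n => (hqpos n).le) hub hinv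
  -- positivity of terms
  have hpos : ∀ n : ℕ, 0 ≤ pdeg m δ₀ (m + n) := by
    intro n
    have h1 : 0 < Real.Gamma (((m+n : ℕ) : ℝ) + δ₀) :=
      Real.Gamma_pos_of_pos (by push_cast; linarith [hx n])
    have h2 : 0 < Real.Gamma ((m:ℝ) + 2 + δ₀ + δ₀ / m) :=
      Real.Gamma_pos_of_pos (by linarith)
    have h3 : 0 < Real.Gamma ((m:ℝ) + δ₀) := Real.Gamma_pos_of_pos hmδ
    have h4 : 0 < Real.Gamma (((m+n : ℕ) : ℝ) + 3 + δ₀ + δ₀ / m) :=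
      Real.Gamma_pos_of_pos (by push_cast; linarith [hx n])
    have : 0 < pdeg m δ₀ (m + n) := by
      rw [pdeg]
      exact div_pos (mul_pos (by linarith) (mul_pos h1 h2)) (mul_pos h3 h4)
    exact this.le
  rw [hasSum_iff_tendsto_nat_of_nonneg hpos]
  have hsum : ∀ n : ℕ, ∑ i ∈ Finset.range n, pdeg m δ₀ (m + i) = C * (q 0 - q n) := by
    intro n
    calc ∑ i ∈ Finset.range n, pdeg m δ₀ (m + i)
        = ∑ i ∈ Finset.range n, C * (q i - q (i+1)) := Finset.sum_congr rfl fun i _ => key i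
      _ = C * ∑ i ∈ Finset.range n, (q i - q (i+1)) := by rw [Finset.mul_sum]
      _ = C * (q 0 - q n) := by rw [Finset.sum_range_sub' q]
  simp_rw [hsum]
  have : Filter.Tendsto (fun n : ℕ => C * (q 0 - q n)) Filter.atTop (nhds (C * (q 0 - 0))) :=
    (Filter.Tendsto.const_mul C (tendsto_const_nhds.sub hqlim))
  simpa [hq0] using this
end

section
/- Let m ≥ 1 be an integer, δ₀ > -m, and define p_k(δ₀) = (2 + δ₀/m) · Γ(k+δ₀)Γ(m+2+δ₀+δ₀/m) / (Γ(m+δ₀)Γ(k+3+δ₀+δ₀/m)) and the tail p_{>k}(δ₀) = ∑_{j>k} p_j(δ₀). Then for every k ≥ m one has p_{>k}(δ₀) = ((k+δ₀)/(2+δ₀/m)) · p_k(δ₀). -/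
theorem stmt_2 (m : ℕ) (hm : 1 ≤ m) (δ₀ : ℝ) (hδ : -(m : ℝ) < δ₀)
    (k : ℕ) (hk : m ≤ k) :
    HasSum (fun j : ℕ => pdeg m δ₀ (k + 1 + j))
      (((k : ℝ) + δ₀) / (2 + δ₀ / m) * pdeg m δ₀ k) := by
  have hmpos : (0:ℝ) < m := by exact_mod_cast hm
  have hδm : -1 < δ₀ / m := by
    rw [neg_lt, ← neg_div, div_lt_one hmpos]; linarith
  have hc : (0:ℝ) < 2 + δ₀ / m := by linarith
  have hkm : (m:ℝ) ≤ k := by exact_mod_cast hk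
  have hmδ : (0:ℝ) < (m:ℝ) + δ₀ := by linarith
  have hM : (0:ℝ) < (m:ℝ) + 2 + δ₀ + δ₀ / m := by linarith
  set f : ℕ → ℝ := fun n => ((n:ℝ) + δ₀) / (2 + δ₀ / m) * pdeg m δ₀ n with hf
  -- positivity of arguments for n ≥ k
  have hnδ : ∀ n : ℕ, k ≤ n → (0:ℝ) < (n:ℝ) + δ₀ := by
    intro n hn
    have : (k:ℝ) ≤ n := by exact_mod_cast hn
    linarith
  have hnb : ∀ n : ℕ, k ≤ n → (0:ℝ) < (n:ℝ) + 3 + δ₀ + δ₀ / m := by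
    intro n hn
    have := hnδ n hn; linarith
  have key : ∀ n : ℕ, k ≤ n → pdeg m δ₀ (n + 1) = f n - f (n + 1) := by
    intro n hn
    have h1 := hnδ n hn
    have h2 := hnb n hn
    have hΓm := Real.Gamma_pos_of_pos hmδ
    have hΓb := Real.Gamma_pos_of_pos h2
    have e1 : ((n:ℝ) + 1 + δ₀) = ((n:ℝ) + δ₀) + 1 := by ring
    have e2 : ((n:ℝ) + 1 + 3 + δ₀ + δ₀ / m) = ((n:ℝ) + 3 + δ₀ + δ₀ / m) + 1 := by ring
    simp only [pdeg, hf]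
    push_cast
    rw [e1, e2, Real.Gamma_add_one (ne_of_gt h1), Real.Gamma_add_one (ne_of_gt h2)]
    generalize Real.Gamma ((n:ℝ) + δ₀) = G1
    generalize Real.Gamma ((m:ℝ) + δ₀) = GM at hΓm
    generalize Real.Gamma ((n:ℝ) + 3 + δ₀ + δ₀ / m) = GB at hΓb
    generalize Real.Gamma ((m:ℝ) + 2 + δ₀ + δ₀ / m) = GC
    generalize hd : δ₀ / (m:ℝ) = d at *
    field_simp
    ring
  -- telescoping partial sums
  have tel : ∀ n : ℕ, ∑ j ∈ Finset.range n, pdeg m δ₀ (k + 1 + j) = f k - f (k + n) := by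
    intro n
    induction n with
    | zero => simp
    | succ n ih =>
      rw [Finset.sum_range_succ, ih]
      have : k + 1 + n = (k + n) + 1 := by ring
      rw [this, key (k + n) (Nat.le_add_right _ _)]
      ring_nf
  -- positivity
  have hΓM := Real.Gamma_pos_of_pos hmδ
  have hΓC := Real.Gamma_pos_of_pos hM
  have hppos : ∀ n : ℕ, k ≤ n → 0 < pdeg m δ₀ n := by
    intro n hn
    have h1 := Real.Gamma_pos_of_pos (hnδ n hn)
    have h2 := Real.Gamma_pos_of_pos (hnb n hn)
    unfold pdeg
    exact div_pos (mul_pos hc (mul_pos h1 hΓC)) (mul_pos hΓM h2)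
  have hfnonneg : ∀ n : ℕ, k ≤ n → 0 ≤ f n := by
    intro n hn
    exact mul_nonneg (div_nonneg (hnδ n hn).le hc.le) (hppos n hn).le
  -- upper bound on f
  have fbound : ∀ n : ℕ, k ≤ n → (0:ℝ) ≤ (n:ℝ) + δ₀ - 0 → (2:ℝ) ≤ (n:ℝ) + 2 + δ₀ →
      f n ≤ Real.Gamma ((m:ℝ) + 2 + δ₀ + δ₀ / m) / Real.Gamma ((m:ℝ) + δ₀) *
        (((n:ℝ) + 1 + δ₀)⁻¹) := by
    intro n hn _ h22
    have h1 := hnδ n hn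
    have h2 := hnb n hn
    have hΓ1 := Real.Gamma_pos_of_pos h1
    have hΓB := Real.Gamma_pos_of_pos h2
    have h1' : (0:ℝ) < (n:ℝ) + 1 + δ₀ := by linarith
    have hGBge : ((n:ℝ) + 1 + δ₀) * (((n:ℝ) + δ₀) * Real.Gamma ((n:ℝ) + δ₀)) ≤
        Real.Gamma ((n:ℝ) + 3 + δ₀ + δ₀ / m) := by
      have e3 : ((n:ℝ) + 2 + δ₀) = (((n:ℝ) + 1 + δ₀) + 1) := by ring
      have e4 : ((n:ℝ) + 1 + δ₀) = (((n:ℝ) + δ₀) + 1) := by ring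
      have hmono : Real.Gamma ((n:ℝ) + 2 + δ₀) ≤ Real.Gamma ((n:ℝ) + 3 + δ₀ + δ₀ / m) := by
        apply (Real.Gamma_strictMonoOn_Ici h22 (by simp only [Set.mem_Ici]; linarith)
          (by linarith)).le
      calc ((n:ℝ) + 1 + δ₀) * (((n:ℝ) + δ₀) * Real.Gamma ((n:ℝ) + δ₀))
          = Real.Gamma ((n:ℝ) + 2 + δ₀) := by
            rw [e3, Real.Gamma_add_one (by linarith), e4,
              Real.Gamma_add_one (ne_of_gt h1)]
        _ ≤ _ := hmono
    have hfeq : f n = ((n:ℝ) + δ₀) * Real.Gamma ((n:ℝ) + δ₀) *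
        Real.Gamma ((m:ℝ) + 2 + δ₀ + δ₀ / m) /
        (Real.Gamma ((m:ℝ) + δ₀) * Real.Gamma ((n:ℝ) + 3 + δ₀ + δ₀ / m)) := by
      simp only [hf, pdeg]
      generalize Real.Gamma ((n:ℝ) + δ₀) = G1 at hΓ1
      generalize Real.Gamma ((m:ℝ) + δ₀) = GM at hΓM
      generalize Real.Gamma ((n:ℝ) + 3 + δ₀ + δ₀ / m) = GB at hΓB
      generalize Real.Gamma ((m:ℝ) + 2 + δ₀ + δ₀ / m) = GC
      generalize hd : δ₀ / (m:ℝ) = d at *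
      field_simp
    rw [hfeq]
    generalize Real.Gamma ((n:ℝ) + δ₀) = G1 at hGBge hΓ1
    generalize Real.Gamma ((m:ℝ) + δ₀) = GM at hΓM
    generalize Real.Gamma ((n:ℝ) + 3 + δ₀ + δ₀ / m) = GB at hGBge hΓB
    generalize Real.Gamma ((m:ℝ) + 2 + δ₀ + δ₀ / m) = GC at hΓC
    have hx : GC / GM * (((n:ℝ) + 1 + δ₀)⁻¹) =
        ((n:ℝ) + δ₀) * G1 * GC / (GM * (((n:ℝ) + 1 + δ₀) * (((n:ℝ) + δ₀) * G1))) := by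
      field_simp
    rw [hx]
    exact div_le_div_of_nonneg_left
      (mul_nonneg (mul_nonneg h1.le hΓ1.le) hΓC.le)
      (mul_pos hΓM (mul_pos h1' (mul_pos h1 hΓ1)))
      (mul_le_mul_of_nonneg_left hGBge hΓM.le)
  -- limit of f (k + n)
  have hlim : Filter.Tendsto (fun n : ℕ => f (k + n)) Filter.atTop (nhds 0) := by
    have hC := Real.Gamma ((m:ℝ) + 2 + δ₀ + δ₀ / m) / Real.Gamma ((m:ℝ) + δ₀)
    apply squeeze_zero'
    · filter_upwards with n using hfnonneg (k + n) (Nat.le_add_right _ _)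
    · filter_upwards [Filter.eventually_ge_atTop ⌈-δ₀⌉₊] with n hn
      have hnd : -δ₀ ≤ (n:ℝ) := le_trans (Nat.le_ceil _) (by exact_mod_cast hn)
      have : (↑(k + n) : ℝ) = (k:ℝ) + n := by push_cast; ring
      apply fbound (k + n) (Nat.le_add_right _ _) <;> rw [this]
      · linarith
      · have : (1:ℝ) ≤ k := by exact_mod_cast le_trans hm hk
        linarith
    · have ht : Filter.Tendsto (fun n : ℕ => (↑(k + n) : ℝ) + 1 + δ₀)
          Filter.atTop Filter.atTop := by
        have : (fun n : ℕ => (↑(k + n) : ℝ) + 1 + δ₀) =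
            fun n : ℕ => (n : ℝ) + ((k : ℝ) + 1 + δ₀) := by
          funext n; push_cast; ring
        rw [this]
        exact Filter.tendsto_atTop_add_const_right _ _ tendsto_natCast_atTop_atTop
      have := (Filter.Tendsto.const_mul
        (Real.Gamma ((m:ℝ) + 2 + δ₀ + δ₀ / m) / Real.Gamma ((m:ℝ) + δ₀))
        ht.inv_tendsto_atTop)
      simpa using this
  -- conclude
  have hnn : ∀ j : ℕ, 0 ≤ pdeg m δ₀ (k + 1 + j) := fun j =>
    (hppos (k + 1 + j) (by omega)).le
  rw [hasSum_iff_tendsto_nat_of_nonneg hnn]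
  simp only [tel]
  have : ((k:ℝ) + δ₀) / (2 + δ₀ / m) * pdeg m δ₀ k = f k - 0 := by simp [hf]
  rw [this]
  exact tendsto_const_nhds.sub hlim
end

section
/- Let m ≥ 1 be an integer and δ₀ > -m. Define v(δ₀,m) = ∑_{k=m}^∞ m·p_k(δ₀)/((k+δ₀)(2m+δ₀)) - m/(2m+δ₀)², where p_k(δ₀) is the limiting degree distribution. Then v(δ₀,m) > 0. -/
/-!
Shifting the index by `m`, `pdeg` is the Waring distribution with parameters `x = m + δ₀` and
`s = 2 + δ₀ / m`. Both its total mass and its mean of `x + j` are telescoping sums of Gamma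
ratios `Γ(y + j) / Γ(y + j + t)`, giving `∑ p_j = 1` and
`∑ (x + j) p_j = x s / (s - 1) = 2m + δ₀`.
Since `1 / z` lies above its tangent line at `2m + δ₀`, strictly at `z = x`, averaging
against `p` gives `∑ p_j / (x + j) > 1 / (2m + δ₀)`.
-/

open Filter Topology Real

section Telescoping

variable {f : ℕ → ℝ} {b c : ℝ}

lemma Antitone.hasSum_sub_succ {L : ℝ} (hf : Antitone f) (hlim : Tendsto f atTop (𝓝 L)) :
    HasSum (fun j => f j - f (j + 1)) (f 0 - L) := by
  rw [hasSum_iff_tendsto_nat_of_nonneg (fun j => sub_nonneg.2 (hf j.le_succ))]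
  simp_rw [Finset.sum_range_sub']
  exact hlim.const_sub (f 0)

lemma Antitone.tendsto_zero_of_mul_div_le_sub_succ (hf : Antitone f) (hf0 : ∀ j, 0 ≤ f j)
    (hb : 0 < b) (hc : 0 < c) (hdec : ∀ j : ℕ, c * f (j + 1) / (j + b) ≤ f j - f (j + 1)) :
    Tendsto f atTop (𝓝 0) := by
  have hjb (j : ℕ) : 0 < (j : ℝ) + b := by positivity
  have hL := tendsto_atTop_ciInf hf ⟨0, by rintro _ ⟨j, rfl⟩; exact hf0 j⟩
  set L := ⨅ j, f j
  suffices L = 0 by rwa [this] at hL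
  by_contra hL0
  have hLpos : 0 < L := (le_ciInf hf0).lt_of_ne' hL0
  -- a positive limit would make the decrements dominate the divergent series `∑ c L / (j + b)`
  have hharm : Summable (fun j : ℕ => c * L * (1 / |(j : ℝ) + b| ^ (1 : ℝ))) := by
    refine (hf.hasSum_sub_succ hL).summable.of_nonneg_of_le (fun j => by positivity)
      fun j => ?_
    rw [abs_of_pos (hjb j), rpow_one, ← mul_div_assoc, mul_one]
    exact (div_le_div_of_nonneg_right (mul_le_mul_of_nonneg_left
      (hf.le_of_tendsto hL _) hc.le) (hjb j).le).trans (hdec j)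
  exact lt_irrefl _ ((summable_one_div_nat_add_rpow b 1).1
    ((summable_mul_left_iff (mul_pos hc hLpos).ne').1 hharm))

end Telescoping

lemma Real.hasSum_Gamma_div_Gamma {y t : ℝ} (hy : 0 < y) (ht : 0 < t) :
    HasSum (fun j : ℕ => t * (Gamma (y + j) / Gamma (y + j + t + 1)))
      (Gamma y / Gamma (y + t)) := by
  set f : ℕ → ℝ := fun j => Gamma (y + j) / Gamma (y + j + t)
  set g : ℕ → ℝ := fun j => Gamma (y + j) / Gamma (y + j + t + 1)
  have hf_pos (j : ℕ) : 0 < f j := div_pos (Gamma_pos_of_pos (by positivity))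
    (Gamma_pos_of_pos (by positivity))
  have hg (j : ℕ) : 0 < g j := div_pos (Gamma_pos_of_pos (by positivity))
    (Gamma_pos_of_pos (by positivity))
  have hf_succ (j : ℕ) : f (j + 1) = (y + j) * g j := by
    have hyj : 0 < y + j := by positivity
    simp only [f, g, Nat.cast_succ, ← add_assoc, add_right_comm _ 1 t, Gamma_add_one hyj.ne']
    ring
  have hsub (j : ℕ) : f j - f (j + 1) = t * g j := by
    have hyjt : 0 < y + j + t := by positivity
    rw [hf_succ]
    simp only [f, g, Gamma_add_one hyjt.ne']
    have := (Gamma_pos_of_pos hyjt).ne'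
    field_simp
    ring
  have hf : Antitone f := antitone_nat_of_succ_le fun j =>
    sub_nonneg.1 <| hsub j ▸ mul_nonneg ht.le (hg j).le
  have hdec (j : ℕ) : t * f (j + 1) / (j + y) ≤ f j - f (j + 1) := by
    rw [hsub, hf_succ, add_comm (j : ℝ) y, mul_div_assoc, mul_div_cancel_left₀ _ (by positivity)]
  have hsum := hf.hasSum_sub_succ
    (hf.tendsto_zero_of_mul_div_le_sub_succ (fun j => (hf_pos j).le) hy ht hdec)
  simp only [hsub, sub_zero] at hsum
  simpa [f] using hsum

lemma inv_lt_tsum_div {ι : Type*} {p z : ι → ℝ} {μ : ℝ} (hμ : 0 < μ) (hz : ∀ i, 0 < z i)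
    (hp : ∀ i, 0 ≤ p i) (hp1 : HasSum p 1) (hzp : HasSum (fun i => z i * p i) μ)
    (hsum : Summable fun i => p i / z i) {i₀ : ι} (hi₀ : 0 < p i₀) (hne : z i₀ ≠ μ) :
    μ⁻¹ < ∑' i, p i / z i := by
  have htangent (i : ι) : (z i)⁻¹ - (2 / μ - z i / μ ^ 2) = (z i - μ) ^ 2 / (μ ^ 2 * z i) := by
    have := (hz i).ne'
    field_simp
    ring
  have hle (i : ι) : (2 / μ - z i / μ ^ 2) * p i ≤ p i / z i := by
    rw [div_eq_inv_mul (p i)]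
    refine mul_le_mul_of_nonneg_right (sub_nonneg.1 ?_) (hp i)
    rw [htangent]
    exact div_nonneg (sq_nonneg _) (mul_pos (pow_pos hμ 2) (hz i)).le
  have hlt : (2 / μ - z i₀ / μ ^ 2) * p i₀ < p i₀ / z i₀ := by
    rw [div_eq_inv_mul (p i₀)]
    refine mul_lt_mul_of_pos_right (sub_pos.1 ?_) hi₀
    rw [htangent]
    exact div_pos (pow_two_pos_of_ne_zero (sub_ne_zero.2 hne)) (mul_pos (pow_pos hμ 2) (hz i₀))
  have htangent_sum := (hp1.mul_left (2 / μ)).sub (hzp.div_const (μ ^ 2))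
  rw [show 2 / μ * 1 - μ / μ ^ 2 = μ⁻¹ by field_simp; ring] at htangent_sum
  refine hasSum_lt hle hlt ?_ hsum.hasSum
  convert htangent_sum using 2 with i
  ring

noncomputable def waring (x s : ℝ) (j : ℕ) : ℝ :=
  s * (Gamma (x + s) / Gamma x) * (Gamma (x + j) / Gamma (x + j + s + 1))

section Waring

variable {x s : ℝ}

lemma waring_pos (hx : 0 < x) (hs : 0 < s) (j : ℕ) : 0 < waring x s j := by
  unfold waring
  have := Gamma_pos_of_pos hx
  have := Gamma_pos_of_pos (by positivity : 0 < x + s)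
  have := Gamma_pos_of_pos (by positivity : 0 < x + j)
  have := Gamma_pos_of_pos (by positivity : 0 < x + j + s + 1)
  positivity

lemma hasSum_waring (hx : 0 < x) (hs : 0 < s) : HasSum (waring x s) 1 := by
  have h := (hasSum_Gamma_div_Gamma hx hs).mul_left (Gamma (x + s) / Gamma x)
  rw [div_mul_div_cancel₀ (Gamma_pos_of_pos hx).ne', div_self
    (Gamma_pos_of_pos (by positivity)).ne'] at h
  exact h.congr_fun fun j => by unfold waring; ring

lemma hasSum_mul_waring (hx : 0 < x) (hs : 1 < s) :
    HasSum (fun j => (x + j) * waring x s j) (x * s / (s - 1)) := by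
  have h := (hasSum_Gamma_div_Gamma (y := x + 1) (by positivity) (sub_pos.2 hs)).mul_left
    (s / (s - 1) * (Gamma (x + s) / Gamma x))
  have hs1 := (sub_pos.2 hs).ne'
  rw [show x + 1 + (s - 1) = x + s by ring, Gamma_add_one hx.ne',
    show s / (s - 1) * (Gamma (x + s) / Gamma x) * (x * Gamma x / Gamma (x + s)) = x * s / (s - 1)
      by have := (Gamma_pos_of_pos hx).ne'
         have := (Gamma_pos_of_pos (by positivity : 0 < x + s)).ne'
         field_simp] at h
  refine h.congr_fun fun j => ?_
  rw [show x + 1 + j + (s - 1) + 1 = x + (j : ℝ) + s + 1 by ring,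
    show x + 1 + j = (x + j) + 1 by ring, Gamma_add_one (by positivity)]
  unfold waring
  field_simp

end Waring

lemma pdeg_add_eq_waring (m : ℕ) (δ : ℝ) (j : ℕ) :
    pdeg m δ (m + j) = waring (m + δ) (2 + δ / m) j := by
  unfold pdeg waring
  rw [show ((m + j : ℕ) : ℝ) + δ = m + δ + j by push_cast; ring,
    show (m : ℝ) + 2 + δ + δ / m = m + δ + (2 + δ / m) by ring,
    show ((m + j : ℕ) : ℝ) + 3 + δ + δ / m = m + δ + j + (2 + δ / m) + 1 by push_cast; ring]
  ring

theorem stmt_9 (m : ℕ) (hm : 1 ≤ m) (δ₀ : ℝ) (hδ : -(m : ℝ) < δ₀) :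
    0 < (∑' j : ℕ, (m : ℝ) * pdeg m δ₀ (m + j) /
          ((((m + j : ℕ) : ℝ) + δ₀) * (2 * m + δ₀)))
        - m / (2 * m + δ₀) ^ 2 := by
  have hm0 : (0 : ℝ) < m := by exact_mod_cast hm
  have hx : 0 < (m : ℝ) + δ₀ := by linarith
  have hs : 1 < 2 + δ₀ / m := by
    have : -1 < δ₀ / m := by rw [lt_div_iff₀ hm0]; linarith
    linarith
  have hμ : 0 < 2 * (m : ℝ) + δ₀ := by linarith
  have hterm (j : ℕ) : (m : ℝ) * pdeg m δ₀ (m + j) / ((((m + j : ℕ) : ℝ) + δ₀) * (2 * m + δ₀)) =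
      m / (2 * m + δ₀) * (waring (m + δ₀) (2 + δ₀ / m) j / (m + δ₀ + j)) := by
    rw [pdeg_add_eq_waring, show ((m + j : ℕ) : ℝ) + δ₀ = m + δ₀ + j by push_cast; ring,
      mul_comm (_ + _), mul_div_mul_comm]
  set p := waring (m + δ₀) (2 + δ₀ / m)
  have hp (j : ℕ) : 0 < p j := waring_pos hx (by linarith) j
  have hmean : HasSum (fun j => (m + δ₀ + j) * p j) (2 * m + δ₀) := by
    have h := hasSum_mul_waring hx hs
    have := hm0.ne'
    rwa [show (m + δ₀) * (2 + δ₀ / m) / (2 + δ₀ / m - 1) = 2 * (m : ℝ) + δ₀ from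
      div_eq_of_eq_mul (by linarith) (by field_simp; ring)] at h
  have hsum : Summable fun j : ℕ => p j / (m + δ₀ + j) :=
    ((hasSum_waring hx (by linarith)).summable.div_const (m + δ₀)).of_nonneg_of_le
      (fun j => (div_pos (hp j) (by positivity)).le)
      (fun j => div_le_div_of_nonneg_left (hp j).le hx (by simp))
  have hkey : (2 * (m : ℝ) + δ₀)⁻¹ < ∑' j, p j / (m + δ₀ + j) :=
    inv_lt_tsum_div hμ (fun j => by positivity) (fun j => (hp j).le)
      (hasSum_waring hx (by linarith)) hmean hsum (hp 0) (by simp; linarith)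
  rw [sub_pos, tsum_congr hterm, tsum_mul_left]
  calc (m : ℝ) / (2 * m + δ₀) ^ 2 = m / (2 * m + δ₀) * (2 * m + δ₀)⁻¹ := by field_simp
    _ < _ := mul_lt_mul_of_pos_left hkey (by positivity)
end

section
/- Let m ≥ 1 be an integer and δ₀ > -m, and let p_k(δ₀) be the limiting degree distribution of the preferential attachment model. Then the mean of the distribution equals 2m, i.e., ∑_{k=m}^∞ k·p_k(δ₀) = 2m; equivalently ∑_{k=m}^∞ (k+δ₀)·p_k(δ₀) = 2m+δ₀. -/
open Filter Topology

theorem Antitone.hasSum_sub_succ_s10 {g : ℕ → ℝ} {l : ℝ} (hg : Antitone g)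
    (h : Tendsto g atTop (𝓝 l)) : HasSum (fun n => g n - g (n + 1)) (g 0 - l) := by
  refine (hasSum_iff_tendsto_nat_of_nonneg (fun n => sub_nonneg.2 (hg n.le_succ)) _).2 ?_
  simp_rw [Finset.sum_range_sub']
  exact tendsto_const_nhds.sub h

namespace Real

variable {a b : ℝ}

theorem Gamma_add_nat_div_Gamma_add_nat_sub_succ (ha : 0 < a) (hb : 0 < b) (n : ℕ) :
    Gamma (a + n) / Gamma (b + n) - Gamma (a + (n + 1 : ℕ)) / Gamma (b + (n + 1 : ℕ)) =
      (b - a) * (Gamma (a + n) / Gamma (b + n + 1)) := by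
  have han : a + n ≠ 0 := by positivity
  have hbn : b + n ≠ 0 := by positivity
  simp only [Nat.cast_succ, ← add_assoc, Gamma_add_one han, Gamma_add_one hbn]
  field_simp
  ring

theorem antitone_Gamma_add_nat_div_Gamma_add_nat (ha : 0 < a) (hab : a ≤ b) :
    Antitone fun n : ℕ => Gamma (a + n) / Gamma (b + n) :=
  antitone_nat_of_succ_le fun n => by
    have := Gamma_pos_of_pos (by positivity : 0 < a + n)
    have := Gamma_pos_of_pos (by linarith : 0 < b + n + 1)
    have := sub_nonneg.2 hab
    linarith [Gamma_add_nat_div_Gamma_add_nat_sub_succ ha (ha.trans_le hab) n,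
      (by positivity : 0 ≤ (b - a) * (Gamma (a + n) / Gamma (b + n + 1)))]

theorem tendsto_Gamma_add_nat_div_Gamma_add_nat (ha : 0 < a) (hab : a < b) :
    Tendsto (fun n : ℕ => Gamma (a + n) / Gamma (b + n)) atTop (𝓝 0) := by
  set g : ℕ → ℝ := fun n => Gamma (a + n) / Gamma (b + n)
  have hb : 0 < b := ha.trans hab
  have hba : 0 < b - a := sub_pos.2 hab
  have hg_pos (n : ℕ) : 0 < g n := by
    have := Gamma_pos_of_pos (by positivity : 0 < a + n)
    have := Gamma_pos_of_pos (by positivity : 0 < b + n)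
    positivity
  have hg_anti : Antitone g := antitone_Gamma_add_nat_div_Gamma_add_nat ha hab.le
  have hg_step (n : ℕ) : g n - g (n + 1) = (b - a) / (b + n) * g n := by
    rw [Gamma_add_nat_div_Gamma_add_nat_sub_succ ha hb, Gamma_add_one (by positivity)]
    simp only [g]
    field_simp
  obtain ⟨L, hL⟩ : ∃ L, Tendsto g atTop (𝓝 L) :=
    ⟨_, tendsto_atTop_ciInf hg_anti ⟨0, fun _ ⟨n, hn⟩ => hn ▸ (hg_pos n).le⟩⟩
  obtain rfl | hL_pos := (ge_of_tendsto' hL fun n => (hg_pos n).le).eq_or_lt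
  · exact hL
  refine absurd ?_ ((summable_one_div_nat_add_rpow b 1).not.2 (lt_irrefl 1))
  refine Summable.of_nonneg_of_le (fun n => by positivity) (fun n => ?_)
    ((hg_anti.hasSum_sub_succ_s10 hL).summable.div_const ((b - a) * L))
  rw [rpow_one, abs_of_pos (by positivity), hg_step, le_div_iff₀ (by positivity), add_comm]
  calc 1 / (b + n) * ((b - a) * L) = (b - a) / (b + n) * L := by ring
    _ ≤ (b - a) / (b + n) * g n := by gcongr; exact hg_anti.le_of_tendsto hL n

theorem hasSum_Gamma_add_nat_div_Gamma_add_nat_add_one (ha : 0 < a) (hab : a < b) :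
    HasSum (fun n : ℕ => Gamma (a + n) / Gamma (b + n + 1)) (Gamma a / Gamma b / (b - a)) := by
  have hba : b - a ≠ 0 := (sub_pos.2 hab).ne'
  have := (antitone_Gamma_add_nat_div_Gamma_add_nat ha hab.le).hasSum_sub_succ_s10
    (tendsto_Gamma_add_nat_div_Gamma_add_nat ha hab)
  simp only [Gamma_add_nat_div_Gamma_add_nat_sub_succ ha (ha.trans hab), Nat.cast_zero, add_zero,
    sub_zero] at this
  rwa [← hasSum_mul_left_iff hba, mul_div_cancel₀ _ hba]

end Real

open Real

/-- The Waring distribution with parameters `a` and `b - a`, i.e. `(b - a) (a)ₙ / (b)ₙ₊₁`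
in rising factorials. -/
noncomputable def waringWeight (a b : ℝ) (n : ℕ) : ℝ :=
  (b - a) * Gamma b / Gamma a * (Gamma (a + n) / Gamma (b + n + 1))

section

variable {a b : ℝ}

theorem hasSum_waringWeight (ha : 0 < a) (hab : a < b) : HasSum (waringWeight a b) 1 := by
  have := (Gamma_pos_of_pos ha).ne'
  have := (Gamma_pos_of_pos (ha.trans hab)).ne'
  have := (sub_pos.2 hab).ne'
  have hsum := (hasSum_Gamma_add_nat_div_Gamma_add_nat_add_one ha hab).mul_left
    ((b - a) * Gamma b / Gamma a)
  rwa [show (b - a) * Gamma b / Gamma a * (Gamma a / Gamma b / (b - a)) = 1 by field_simp] at hsum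

theorem hasSum_add_mul_waringWeight (ha : 0 < a) (hab : a + 1 < b) :
    HasSum (fun n : ℕ => (a + n) * waringWeight a b n) ((b - a) * a / (b - a - 1)) := by
  have hterm (n : ℕ) : (a + n) * waringWeight a b n =
      (b - a) * Gamma b / Gamma a * (Gamma (a + 1 + n) / Gamma (b + n + 1)) := by
    rw [waringWeight, add_right_comm a 1, Gamma_add_one (s := a + n) (by positivity)]
    ring
  have := (Gamma_pos_of_pos ha).ne'
  have := (Gamma_pos_of_pos (by linarith : 0 < b)).ne'
  have : b - a - 1 ≠ 0 := by linarith
  have : b - (a + 1) ≠ 0 := by linarith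
  have hsum := (hasSum_Gamma_add_nat_div_Gamma_add_nat_add_one (by positivity) hab).mul_left
    ((b - a) * Gamma b / Gamma a)
  rwa [← funext hterm, Gamma_add_one ha.ne', show (b - a) * Gamma b / Gamma a *
    (a * Gamma a / Gamma b / (b - (a + 1))) = (b - a) * a / (b - a - 1) by field_simp; ring] at hsum

end

theorem pdeg_add_eq_waringWeight (m : ℕ) (δ : ℝ) (j : ℕ) :
    pdeg m δ (m + j) = waringWeight (m + δ) (m + 2 + δ + δ / m) j := by
  rw [pdeg, waringWeight]
  push_cast
  ring_nf

section

variable {m : ℕ} {δ : ℝ}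

theorem hasSum_pdeg (hm : 0 < m) (hδ : -(m : ℝ) < δ) :
    HasSum (fun j : ℕ => pdeg m δ (m + j)) 1 := by
  have hδm : -1 < δ / m := by rwa [lt_div_iff₀ (Nat.cast_pos.2 hm), neg_one_mul]
  simpa only [pdeg_add_eq_waringWeight] using hasSum_waringWeight (by linarith) (by linarith)

theorem hasSum_add_mul_pdeg (hm : 0 < m) (hδ : -(m : ℝ) < δ) :
    HasSum (fun j : ℕ => (((m + j : ℕ) : ℝ) + δ) * pdeg m δ (m + j)) (2 * m + δ) := by
  have hδm : -1 < δ / m := by rwa [lt_div_iff₀ (Nat.cast_pos.2 hm), neg_one_mul]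
  have hcast (j : ℕ) : ((m + j : ℕ) : ℝ) + δ = m + δ + j := by push_cast; ring
  have hmean : (m + 2 + δ + δ / m - (m + δ)) * (m + δ) / (m + 2 + δ + δ / m - (m + δ) - 1) =
      2 * m + δ := by
    rw [show (m : ℝ) + 2 + δ + δ / m - (m + δ) - 1 = 1 + δ / m by ring,
      div_eq_iff (by linarith)]
    field_simp
    ring
  simpa only [pdeg_add_eq_waringWeight, hcast, hmean] using
    hasSum_add_mul_waringWeight (a := m + δ) (b := m + 2 + δ + δ / m) (by linarith) (by linarith)

end

theorem stmt_10 (m : ℕ) (hm : 1 ≤ m) (δ₀ : ℝ) (hδ : -(m : ℝ) < δ₀) :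
    HasSum (fun j : ℕ => ((m + j : ℕ) : ℝ) * pdeg m δ₀ (m + j)) (2 * m) ∧
    HasSum (fun j : ℕ => (((m + j : ℕ) : ℝ) + δ₀) * pdeg m δ₀ (m + j)) (2 * m + δ₀) := by
  have hmoment := hasSum_add_mul_pdeg hm hδ
  refine ⟨?_, hmoment⟩
  simpa only [add_mul, add_sub_cancel_right, mul_one] using
    hmoment.sub ((hasSum_pdeg hm hδ).mul_left δ₀)
end

section
/- Fix c > 0, γ ∈ (0,1), m ≥ 1 an integer, δ > -m. Let τ_n = n − c·n^γ and let k = k(n) be a sequence of integers with m ≤ k(n) and k(n) = o(n^{1−γ}). Then the product ∏_{j=⌈τ_n⌉+1}^{n} ∏_{i=1}^{m} (1 − (k+δ)/(j(2m+δ) − 2m + i − 1)) satisfies: 1 minus this product is asymptotic to c·m·n^{γ−1}·(k+δ)/(2m+δ), i.e., [1 − ∏∏(…)] / (c·m·n^{γ−1}·(k+δ)/(2m+δ)) → 1 as n → ∞. -/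
/-!
Write `x_{j,i} = (k + δ) / (j (2m + δ) - 2m + i - 1)` and `S = ∑ x_{j,i}`. Once `k + δ` is below
every denominator, all `x_{j,i}` lie in `[0, 1]`, and the Weierstrass product inequality together
with `1 - x ≤ e^{-x} ≤ 1 - x + x²/2` squeezes `1 - ∏ (1 - x_{j,i})` between `S - S²/2` and `S`.
Every denominator lies between `⌈τ_n⌉ (2m + δ) + δ` and `n (2m + δ)`, both `∼ n (2m + δ)`, and
`j` ranges over `∼ c n^γ` values, so `S ∼ c m n^{γ-1} (k + δ) / (2m + δ)`. This tends to `0`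
because `k = o(n^{1-γ})`, so the `S²` term is negligible.
-/

open Filter Asymptotics Topology Finset

theorem Real.exp_neg_le_one_sub_add_sq_div_two {x : ℝ} (hx : 0 ≤ x) :
    Real.exp (-x) ≤ 1 - x + x ^ 2 / 2 := by
  have hq : 0 ≤ 1 - x + x ^ 2 / 2 := by nlinarith [sq_nonneg (x - 1)]
  rw [Real.exp_neg, inv_le_iff_one_le_mul₀ (Real.exp_pos x)]
  nlinarith [mul_le_mul_of_nonneg_right (Real.quadratic_le_exp_of_nonneg hx) hq, sq_nonneg (x ^ 2)]

theorem Finset.one_sub_sum_le_prod_one_sub {ι : Type*} (s : Finset ι) {f : ι → ℝ}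
    (h0 : ∀ i ∈ s, 0 ≤ f i) (h1 : ∀ i ∈ s, f i ≤ 1) :
    1 - ∑ i ∈ s, f i ≤ ∏ i ∈ s, (1 - f i) := by
  induction s using Finset.cons_induction with
  | empty => simp
  | cons a s ha ih =>
    simp only [forall_mem_cons] at h0 h1
    rw [sum_cons, prod_cons]
    nlinarith [mul_le_mul_of_nonneg_left (ih h0.2 h1.2) (sub_nonneg.2 h1.1),
      mul_nonneg h0.1 (sum_nonneg h0.2)]

theorem Finset.prod_one_sub_le_exp_neg_sum {ι : Type*} (s : Finset ι) {f : ι → ℝ}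
    (h1 : ∀ i ∈ s, f i ≤ 1) : ∏ i ∈ s, (1 - f i) ≤ Real.exp (-∑ i ∈ s, f i) := by
  rw [← sum_neg_distrib, Real.exp_sum]
  exact prod_le_prod (fun i hi => sub_nonneg.2 (h1 i hi)) fun i _ => Real.one_sub_le_exp_neg _

theorem Finset.one_sub_prod_one_sub_mem_Icc {ι : Type*} (s : Finset ι) {f : ι → ℝ}
    (h0 : ∀ i ∈ s, 0 ≤ f i) (h1 : ∀ i ∈ s, f i ≤ 1) :
    1 - ∏ i ∈ s, (1 - f i) ∈ Set.Icc (∑ i ∈ s, f i - (∑ i ∈ s, f i) ^ 2 / 2) (∑ i ∈ s, f i) := by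
  have hexp := Real.exp_neg_le_one_sub_add_sq_div_two (sum_nonneg h0)
  constructor
  · linarith [s.prod_one_sub_le_exp_neg_sum h1]
  · linarith [s.one_sub_sum_le_prod_one_sub h0 h1]

theorem tendsto_div_of_sub_sq_div_two_le_of_le {α : Type*} {l : Filter α} {S X D : α → ℝ}
    (hSD : Tendsto (fun a => S a / D a) l (𝓝 1)) (hD : Tendsto D l (𝓝 0))
    (hX : ∀ᶠ a in l, 0 < D a ∧ S a - S a ^ 2 / 2 ≤ X a ∧ X a ≤ S a) :
    Tendsto (fun a => X a / D a) l (𝓝 1) := by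
  have hS : Tendsto S l (𝓝 0) := by
    refine (by simpa using hSD.mul hD : Tendsto (fun a => S a / D a * D a) l (𝓝 0)).congr' ?_
    filter_upwards [hX] with a ha
    exact div_mul_cancel₀ _ ha.1.ne'
  have hlow : Tendsto (fun a => S a / D a * (1 - S a / 2)) l (𝓝 1) := by
    simpa using hSD.mul ((hS.div_const 2).const_sub 1)
  refine tendsto_of_tendsto_of_tendsto_of_le_of_le' hlow hSD ?_ ?_ <;>
    filter_upwards [hX] with a ⟨hDa, hlo, hup⟩
  · calc S a / D a * (1 - S a / 2) = (S a - S a ^ 2 / 2) / D a := by ring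
      _ ≤ X a / D a := by gcongr
  · gcongr

theorem tendsto_rpow_mul_add_div_of_isLittleO {γ : ℝ} (hγ : γ < 1) {f : ℕ → ℝ}
    (hf : f =o[atTop] fun n : ℕ => (n : ℝ) ^ (1 - γ)) (δ : ℝ) :
    Tendsto (fun n : ℕ => (n : ℝ) ^ γ * (f n + δ) / n) atTop (𝓝 0) := by
  have hpow : Tendsto (fun n : ℕ => (n : ℝ) ^ (γ - 1)) atTop (𝓝 0) := by
    simpa [Function.comp_def] using
      (tendsto_rpow_neg_atTop (by linarith : 0 < 1 - γ)).comp tendsto_natCast_atTop_atTop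
  refine (by simpa using hf.tendsto_div_nhds_zero.add (hpow.const_mul δ) :
    Tendsto (fun n : ℕ => f n / (n : ℝ) ^ (1 - γ) + δ * (n : ℝ) ^ (γ - 1)) atTop (𝓝 0)).congr' ?_
  filter_upwards [eventually_gt_atTop 0] with n hn
  rw [div_eq_mul_inv, ← Real.rpow_neg (Nat.cast_nonneg n), neg_sub,
    Real.rpow_sub_one (by positivity)]
  ring

theorem tendsto_ceil_sub_div_self {T : ℕ → ℝ} (hT : ∀ᶠ n in atTop, 0 ≤ T n)
    (hTn : Tendsto (fun n : ℕ => T n / n) atTop (𝓝 0)) :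
    Tendsto (fun n : ℕ => (⌈(n : ℝ) - T n⌉₊ : ℝ) / n) atTop (𝓝 1) := by
  refine tendsto_of_tendsto_of_tendsto_of_le_of_le' (by simpa using hTn.const_sub 1)
    tendsto_const_nhds ?_ ?_ <;> filter_upwards [hT, eventually_gt_atTop 0] with n hTn hn
  · have hn' : (0 : ℝ) < n := by exact_mod_cast hn
    rw [one_sub_div hn'.ne']
    gcongr
    exact Nat.le_ceil _
  · have hn' : (0 : ℝ) < n := by exact_mod_cast hn
    rw [div_le_one hn']
    exact_mod_cast Nat.ceil_le.2 (by linarith)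

theorem tendsto_sub_ceil_sub_div {T : ℕ → ℝ} (hT : Tendsto T atTop atTop)
    (hTn : Tendsto (fun n : ℕ => T n / n) atTop (𝓝 0)) :
    Tendsto (fun n : ℕ => ((n - ⌈(n : ℝ) - T n⌉₊ : ℕ) : ℝ) / T n) atTop (𝓝 1) := by
  have hle : ∀ᶠ n : ℕ in atTop, T n ≤ n := by
    filter_upwards [hTn.eventually_lt_const one_pos, eventually_gt_atTop 0] with n hn hn0
    exact ((div_lt_one (by exact_mod_cast hn0)).1 hn).le
  refine tendsto_of_tendsto_of_tendsto_of_le_of_le'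
    (by simpa using hT.inv_tendsto_atTop.const_sub 1) tendsto_const_nhds ?_ ?_ <;>
    filter_upwards [hT.eventually_gt_atTop 0, hle] with n hT0 hTn
  all_goals
    have hceil : ⌈(n : ℝ) - T n⌉₊ ≤ n := Nat.ceil_le.2 (by linarith)
    rw [Nat.cast_sub hceil]
  · rw [← one_div, one_sub_div hT0.ne']
    exact div_le_div_of_nonneg_right (by linarith [Nat.ceil_lt_add_one (sub_nonneg.2 hTn)]) hT0.le
  · rw [div_le_one hT0]
    linarith [Nat.le_ceil ((n : ℝ) - T n)]

theorem tendsto_mul_add_div_natCast {a : ℕ → ℝ} (ha : Tendsto (fun n => a n / n) atTop (𝓝 1))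
    (M δ : ℝ) : Tendsto (fun n : ℕ => (a n * M + δ) / n) atTop (𝓝 M) := by
  simpa [add_div, mul_div_right_comm] using
    (ha.mul_const M).add (tendsto_const_div_atTop_nhds_zero_nat δ)

/-- `(k + δ) / attachNormalizer m δ j i` is the probability that the `i`-th edge added at time `j`
attaches to a given vertex of degree `k`. -/
def attachNormalizer (m : ℕ) (δ : ℝ) (j i : ℕ) : ℝ := j * (2 * m + δ) - 2 * m + i - 1

theorem attachNormalizer_mem_Icc {m A n j i : ℕ} {δ : ℝ} (hM : 0 ≤ 2 * (m : ℝ) + δ)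
    (hj : j ∈ Ioc A n) (hi : i ∈ Icc 1 m) :
    attachNormalizer m δ j i ∈ Set.Icc (A * (2 * m + δ) + δ) (n * (2 * m + δ)) := by
  rw [mem_Ioc] at hj
  rw [mem_Icc] at hi
  have hAj : (A : ℝ) + 1 ≤ j := by exact_mod_cast hj.1
  have hjn : (j : ℝ) ≤ n := by exact_mod_cast hj.2
  have hi1 : (1 : ℝ) ≤ i := by exact_mod_cast hi.1
  have him : (i : ℝ) ≤ m := by exact_mod_cast hi.2
  constructor <;> unfold attachNormalizer
  · nlinarith [mul_le_mul_of_nonneg_right hAj hM]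
  · nlinarith [mul_le_mul_of_nonneg_right hjn hM]

theorem sum_div_attachNormalizer_mem_Icc {m A n : ℕ} {δ K : ℝ} (hM : 0 ≤ 2 * (m : ℝ) + δ)
    (hlo : 0 < A * (2 * (m : ℝ) + δ) + δ) (hK : 0 ≤ K) :
    ∑ p ∈ Ioc A n ×ˢ Icc 1 m, K / attachNormalizer m δ p.1 p.2 ∈
      Set.Icc ((n - A : ℕ) * m * (K / (n * (2 * m + δ))))
        ((n - A : ℕ) * m * (K / (A * (2 * m + δ) + δ))) := by
  have hcard : ((Ioc A n ×ˢ Icc 1 m).card : ℝ) = (n - A : ℕ) * m := by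
    simp [card_product]
  have hmem : ∀ p ∈ Ioc A n ×ˢ Icc 1 m, attachNormalizer m δ p.1 p.2 ∈ _ := fun p hp =>
    attachNormalizer_mem_Icc hM (mem_product.1 hp).1 (mem_product.1 hp).2
  constructor
  · refine le_of_eq_of_le ?_ (card_nsmul_le_sum _ _ (K / (n * (2 * m + δ))) fun p hp => ?_)
    · rw [nsmul_eq_mul, hcard]
    · exact div_le_div_of_nonneg_left hK (hlo.trans_le (hmem p hp).1) (hmem p hp).2
  · refine le_of_le_of_eq (sum_le_card_nsmul _ _ (K / (A * (2 * m + δ) + δ)) fun p hp => ?_) ?_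
    · exact div_le_div_of_nonneg_left hK hlo (hmem p hp).1
    · rw [nsmul_eq_mul, hcard]

theorem sum_div_attachNormalizer_div_mem_Icc {m A n : ℕ} {δ T K : ℝ} (hm : 0 < m) (hn : 0 < n)
    (hT : 0 < T) (hK : 0 < K) (hM : 0 < 2 * (m : ℝ) + δ) (hlo : 0 < A * (2 * (m : ℝ) + δ) + δ) :
    (∑ p ∈ Ioc A n ×ˢ Icc 1 m, K / attachNormalizer m δ p.1 p.2) / (T * m * K / (n * (2 * m + δ)))
      ∈ Set.Icc ((n - A : ℕ) / T)
        ((n - A : ℕ) / T * (n * (2 * m + δ) / (A * (2 * m + δ) + δ))) := by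
  obtain ⟨hSlo, hShi⟩ := sum_div_attachNormalizer_mem_Icc (n := n) hM.le hlo hK.le
  generalize 2 * (m : ℝ) + δ = M at *
  have hD : 0 < T * m * K / (n * M) := by positivity
  constructor
  · calc ((n - A : ℕ) : ℝ) / T = (n - A : ℕ) * m * (K / (n * M)) / (T * m * K / (n * M)) := by
          field_simp
      _ ≤ _ := by gcongr
  · calc _ ≤ (n - A : ℕ) * m * (K / (A * M + δ)) / (T * m * K / (n * M)) := by gcongr
      _ = _ := by field_simp

theorem tendsto_one_sub_prod_div_attachNormalizer {m : ℕ} (hm : 1 ≤ m) {δ : ℝ}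
    (hM : 0 < 2 * (m : ℝ) + δ) {A : ℕ → ℕ} {T K : ℕ → ℝ} (hK : ∀ n, 0 < K n)
    (hT : Tendsto T atTop atTop)
    (hW : Tendsto (fun n => ((n - A n : ℕ) : ℝ) / T n) atTop (𝓝 1))
    (hA : Tendsto (fun n => (A n : ℝ) / n) atTop (𝓝 1))
    (hTK : Tendsto (fun n => T n * K n / n) atTop (𝓝 0)) :
    Tendsto (fun n => (1 - ∏ j ∈ Ioc (A n) n, ∏ i ∈ Icc 1 m, (1 - K n / attachNormalizer m δ j i))
      / (T n * m * K n / (n * (2 * m + δ)))) atTop (𝓝 1) := by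
  set M := 2 * (m : ℝ) + δ
  set S := fun n => ∑ p ∈ Ioc (A n) n ×ˢ Icc 1 m, K n / attachNormalizer m δ p.1 p.2
  set D := fun n => T n * m * K n / (n * M)
  have hL := tendsto_mul_add_div_natCast hA M δ
  have hR : Tendsto (fun n : ℕ => n * M / (A n * M + δ)) atTop (𝓝 1) := by
    refine (div_self hM.ne' ▸ tendsto_const_nhds.div hL hM.ne').congr fun n => ?_
    show M / ((A n * M + δ) / n) = _
    rw [div_div_eq_mul_div, mul_comm]
  have hKn : Tendsto (fun n => K n / n) atTop (𝓝 0) := by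
    refine (by simpa using hTK.mul hT.inv_tendsto_atTop :
      Tendsto (fun n => T n * K n / n * (T n)⁻¹) atTop (𝓝 0)).congr' ?_
    filter_upwards [hT.eventually_gt_atTop 0] with n hn
    field_simp
  have hD : Tendsto D atTop (𝓝 0) := by
    refine (by simpa using hTK.mul_const (m / M) :
      Tendsto (fun n => T n * K n / n * (m / M)) atTop (𝓝 0)).congr fun n => ?_
    rw [div_mul_div_comm, mul_right_comm]
  have hgood : ∀ᶠ n : ℕ in atTop,
      0 < n ∧ 0 < T n ∧ 0 < D n ∧ 0 < A n * M + δ ∧ K n ≤ A n * M + δ := by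
    filter_upwards [eventually_gt_atTop 0, hT.eventually_gt_atTop 0, hKn.eventually_lt hL hM]
      with n hn hTn hKL
    have hn' : (0 : ℝ) < n := by exact_mod_cast hn
    rw [div_lt_div_iff_of_pos_right hn'] at hKL
    have hm' : (0 : ℝ) < m := by exact_mod_cast hm
    exact ⟨hn, hTn, div_pos (mul_pos (mul_pos hTn hm') (hK n)) (mul_pos hn' hM),
      (hK n).trans hKL, hKL.le⟩
  have hSD : Tendsto (fun n => S n / D n) atTop (𝓝 1) := by
    refine tendsto_of_tendsto_of_tendsto_of_le_of_le' hW (by simpa using hW.mul hR) ?_ ?_ <;>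
      filter_upwards [hgood] with n ⟨hn, hTn, _, hlo, _⟩
    exacts [(sum_div_attachNormalizer_div_mem_Icc hm hn hTn (hK n) hM hlo).1,
      (sum_div_attachNormalizer_div_mem_Icc hm hn hTn (hK n) hM hlo).2]
  refine tendsto_div_of_sub_sq_div_two_le_of_le hSD hD ?_
  filter_upwards [hgood] with n ⟨_, _, hDn, hlo, hKlo⟩
  refine ⟨hDn, ?_⟩
  rw [← prod_product']
  refine one_sub_prod_one_sub_mem_Icc _ (fun p hp => ?_) (fun p hp => ?_) <;>
    have ha := (attachNormalizer_mem_Icc hM.le (mem_product.1 hp).1 (mem_product.1 hp).2).1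
  · exact div_nonneg (hK n).le (hlo.trans_le ha).le
  · exact (div_le_one (hlo.trans_le ha)).2 (hKlo.trans ha)

theorem stmt_14 (c γ : ℝ) (hc : 0 < c) (hγ0 : 0 < γ) (hγ1 : γ < 1)
    (m : ℕ) (hm : 1 ≤ m) (δ : ℝ) (hδ : -(m : ℝ) < δ)
    (k : ℕ → ℕ) (hk : ∀ n, m ≤ k n)
    (hko : (fun n : ℕ => (k n : ℝ)) =o[atTop] fun n : ℕ => (n : ℝ) ^ (1 - γ)) :
    Tendsto (fun n : ℕ =>
        (1 - ∏ j ∈ Finset.Ioc ⌈(n : ℝ) - c * (n : ℝ) ^ γ⌉₊ n, ∏ i ∈ Finset.Icc 1 m,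
            (1 - ((k n : ℝ) + δ) / ((j : ℝ) * (2 * m + δ) - 2 * m + (i : ℝ) - 1))) /
          (c * m * (n : ℝ) ^ (γ - 1) * ((k n : ℝ) + δ) / (2 * m + δ)))
      atTop (nhds 1) := by
  have hK : ∀ n, 0 < (k n : ℝ) + δ := fun n => by
    have : (m : ℝ) ≤ k n := by exact_mod_cast hk n
    linarith
  have hM : 0 < 2 * (m : ℝ) + δ := by linarith [(Nat.cast_nonneg m : (0 : ℝ) ≤ m)]
  have hT : Tendsto (fun n : ℕ => c * (n : ℝ) ^ γ) atTop atTop :=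
    ((tendsto_rpow_atTop hγ0).comp tendsto_natCast_atTop_atTop).const_mul_atTop hc
  have hTn : Tendsto (fun n : ℕ => c * (n : ℝ) ^ γ / n) atTop (𝓝 0) := by
    simpa [mul_div_assoc] using
      (tendsto_rpow_mul_add_div_of_isLittleO hγ1 (isLittleO_zero _ _) 1).const_mul c
  have hTK : Tendsto (fun n : ℕ => c * (n : ℝ) ^ γ * ((k n : ℝ) + δ) / n) atTop (𝓝 0) := by
    simpa [mul_assoc, mul_div_assoc] using
      (tendsto_rpow_mul_add_div_of_isLittleO hγ1 hko δ).const_mul c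
  refine (tendsto_one_sub_prod_div_attachNormalizer hm hM hK hT (tendsto_sub_ceil_sub_div hT hTn)
    (tendsto_ceil_sub_div_self (hT.eventually_ge_atTop 0) hTn) hTK).congr' ?_
  filter_upwards [eventually_gt_atTop 0] with n hn
  simp only [attachNormalizer]
  congr 1
  rw [Real.rpow_sub_one (by positivity), ← div_div]
  ring
end
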